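/- arXiv:1803.03621 — 2 statements merged into one kernel-verified Lean document; each statement's English description precedes it below -/
import Mathlib

section
/- Let ν_1, …, ν_m be probability measures on a finite group G with ‖ν_k − μ‖_TV ≤ ε_k (μ uniform). With D_k = X_k⋯X_1 for independent X_k ∼ ν_k, let ν̃ be the law of (D_1,…,D_m) and T : M_d → M_d a quantum channel with a unitary representation U : G → U(d). Then ‖𝒯_{ν̃,m}(T) − 𝒯(T)^m‖_{1→1} ≤ 4·sqrt( (log|G|/(1−|G|^{-1})) · Σ_{k=1}^m ε_k ). -/
open scoped Matrix ComplexOrder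
open Matrix

noncomputable section

variable {d : ℕ}

/-- The space of d×d complex matrices. -/
abbrev Md (d : ℕ) := Matrix (Fin d) (Fin d) ℂ

/-- Choi matrix of a linear map on `Md d`. -/
def choiMatrix (T : Md d →ₗ[ℂ] Md d) :
    Matrix (Fin d × Fin d) (Fin d × Fin d) ℂ :=
  fun p q => (T (Matrix.single p.1 q.1 1)) p.2 q.2

/-- Complete positivity via positive semidefiniteness of the Choi matrix. -/
def IsCompletelyPositive (T : Md d →ₗ[ℂ] Md d) : Prop :=
  (choiMatrix T).PosSemidef

/-- Trace preserving. -/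
def IsTracePreserving (T : Md d →ₗ[ℂ] Md d) : Prop :=
  ∀ X : Md d, (T X).trace = X.trace

/-- A quantum channel is a completely positive trace-preserving linear map. -/
def IsQuantumChannel (T : Md d →ₗ[ℂ] Md d) : Prop :=
  IsCompletelyPositive T ∧ IsTracePreserving T

/-- Density matrix. -/
def IsDensityMatrix (ρ : Md d) : Prop := ρ.PosSemidef ∧ ρ.trace = 1

/-- POVM element: `0 ≤ E ≤ I`. -/
def IsPOVMElement (E : Md d) : Prop := E.PosSemidef ∧ (1 - E).PosSemidef

/-- The maximally entangled vector `|Ω⟩ = d^{-1/2} ∑ᵢ |i⟩⊗|i⟩`. -/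
def maxEnt (d : ℕ) : Fin d × Fin d → ℂ :=
  fun p => if p.1 = p.2 then ((Real.sqrt d : ℂ))⁻¹ else 0

/-- The projection `|Ω⟩⟨Ω|`. -/
def omegaProj (d : ℕ) : Matrix (Fin d × Fin d) (Fin d × Fin d) ℂ :=
  fun p q => maxEnt d p * star (maxEnt d q)

/-- The action of `T ⊗ id` on matrices over `Fin d × Fin d`. -/
def tensorId (T : Md d →ₗ[ℂ] Md d)
    (M : Matrix (Fin d × Fin d) (Fin d × Fin d) ℂ) :
    Matrix (Fin d × Fin d) (Fin d × Fin d) ℂ :=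
  fun p q => ∑ i : Fin d, ∑ k : Fin d,
    (T (Matrix.single i k 1)) p.1 q.1 * M (i, p.2) (k, q.2)

/-- Entanglement fidelity `⟨Ω| (T ⊗ id)(|Ω⟩⟨Ω|) |Ω⟩`. -/
def entFidelity (T : Md d →ₗ[ℂ] Md d) : ℂ :=
  ∑ p : Fin d × Fin d, ∑ q : Fin d × Fin d,
    star (maxEnt d p) * (tensorId T (omegaProj d)) p q * maxEnt d q

/-- Conjugation map `X ↦ A X Aᴴ` as a linear map on matrices. -/
def conjMap (A : Md d) : Md d →ₗ[ℂ] Md d where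
  toFun X := A * X * Aᴴ
  map_add' X Y := by simp [Matrix.mul_add, Matrix.add_mul]
  map_smul' c X := by simp [Matrix.mul_smul, Matrix.smul_mul]

variable {G : Type*} [Group G] [Fintype G]

/-- A unitary representation of `G` on `ℂ^d`: a monoid hom into the unitary group. -/
abbrev UnitaryRep (G : Type*) [Group G] (d : ℕ) :=
  G →* Matrix.unitaryGroup (Fin d) ℂ

/-- The Haar (uniform) twirl of a linear map. -/
def twirl (U : UnitaryRep G d) (T : Md d →ₗ[ℂ] Md d) : Md d →ₗ[ℂ] Md d :=
  (Fintype.card G : ℂ)⁻¹ •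
    ∑ g : G, conjMap ((U g : Md d))ᴴ ∘ₗ T ∘ₗ conjMap (U g : Md d)

/-- Covariance of `T` w.r.t. the representation `U`. -/
def IsCovariant (U : UnitaryRep G d) (T : Md d →ₗ[ℂ] Md d) : Prop :=
  ∀ (g : G) (X : Md d),
    T ((U g : Md d) * X * (U g : Md d)ᴴ) = (U g : Md d) * T X * (U g : Md d)ᴴ

end

noncomputable section
variable {d : ℕ} {G : Type*} [Group G] [Fintype G]

/-- One step `𝒰_g ∘ T ∘ 𝒰_g*` of a twirled sequence, as an endomorphism of `Md d`. -/
def seqStep (U : UnitaryRep G d) (T : Md d →ₗ[ℂ] Md d) (g : G) :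
    Module.End ℂ (Md d) :=
  (conjMap ((U g : Md d)) : Module.End ℂ (Md d)) * T * conjMap ((U g : Md d))ᴴ

/-- The `ν̃`-twirl to the power `m`:
`𝒯_{ν̃,m}(T) = ∑ ν̃(g₁,…,g_m) ∘ₖ (𝒰_{g_k} ∘ T ∘ 𝒰_{g_k}*)`. -/
def nuTwirl {m : ℕ} (U : UnitaryRep G d) (T : Md d →ₗ[ℂ] Md d)
    (ν : (Fin m → G) → ℝ) : Module.End ℂ (Md d) :=
  ∑ f : Fin m → G, (ν f : ℂ) • (List.ofFn fun k : Fin m => seqStep U T (f k)).prod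

/-- Total variation distance between two probability mass functions on a finite type. -/
def tvDist {S : Type*} [Fintype S] (μ ν : S → ℝ) : ℝ :=
  (1 / 2) * ∑ s : S, |μ s - ν s|

/-- A probability mass function. -/
def IsProb {S : Type*} [Fintype S] (ν : S → ℝ) : Prop :=
  (∀ s, 0 ≤ ν s) ∧ ∑ s : S, ν s = 1

/-- The law of `(D₁,…,D_m)` where `D_k = X_k ⋯ X₁` and the `X_k` are independent
with laws `ν k`. -/
def walkLaw {m : ℕ} (ν : Fin m → G → ℝ) (h : Fin m → G) : ℝ :=
  ∏ k : Fin m,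
    ν k (h k * (if _hk : (k : ℕ) = 0 then (1 : G)
      else (h ⟨(k : ℕ) - 1, Nat.lt_of_le_of_lt (Nat.sub_le _ _) k.isLt⟩)⁻¹))

/-- The uniform (Haar) pmf on a finite type. -/
def uniformPMF (S : Type*) [Fintype S] : S → ℝ := fun _ => (Fintype.card S : ℝ)⁻¹

/-- The Schatten 1-norm (trace norm) of a matrix: `Tr √(AᴴA)`. -/
def traceNorm (A : Md d) : ℝ :=
  ((Matrix.posSemidef_conjTranspose_mul_self A).1.eigenvectorUnitary.1 *
    Matrix.diagonal (((↑) : ℝ → ℂ) ∘ (Real.sqrt ∘ (Matrix.posSemidef_conjTranspose_mul_self A).1.eigenvalues)) *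
    (star (Matrix.posSemidef_conjTranspose_mul_self A).1.eigenvectorUnitary : Md d)).trace.re

/-- The induced `1→1` norm of a linear map on matrices. -/
def norm11 (Φ : Md d →ₗ[ℂ] Md d) : ℝ :=
  sSup {c : ℝ | ∃ X : Md d, X ≠ 0 ∧ c = traceNorm (Φ X) / traceNorm X}

end

/-!
The difference `𝒯_{ν̃,m}(T) - 𝒯(T)^m` is `∑_h (ν̃ h - |G|^{-m}) Φ_h`, where every `Φ_h` is a
composition of unitary conjugations and `T`, hence positive and trace preserving. Such a map
does not increase the trace norm of a Hermitian matrix (split it into positive and negative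
parts), so it increases the trace norm of an arbitrary matrix at most by a factor `2` (split it
into real and imaginary parts). This bounds the `1→1` norm by `4 ‖ν̃ - μ^{⊗m}‖_TV`.

The increments `(D_k) ↦ (D_k D_{k-1}⁻¹)` form a bijection of `G^m` carrying `ν̃` to `⊗ ν_k` and
fixing the uniform law, and total variation is subadditive on product laws, so
`‖ν̃ - μ^{⊗m}‖_TV ≤ min (1, ∑ ε_k) ≤ √(C ∑ ε_k)`, because `C = log |G| / (1 - |G|⁻¹) ≥ 1` as soon
as `|G| ≥ 2` (and for `|G| = 1` both laws coincide).

The trace norm is `tr |A|` for the functional-calculus absolute value `|A| = √(Aᴴ A)`. Its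
triangle inequality comes from the duality `‖A‖₁ = max_{‖W‖ ≤ 1} Re tr (W A)` (operator norm),
with the maximum attained at the adjoint of the polar part of `A`.
-/

section
open scoped MatrixOrder Matrix.Norms.L2Operator ComplexStarModule

namespace Matrix
variable {n : Type*} [Fintype n]

lemma re_trace_le_re_trace {A B : Matrix n n ℂ} (h : A ≤ B) : A.trace.re ≤ B.trace.re := by
  simpa [trace_sub] using (Complex.nonneg_iff.mp (le_iff.mp h).trace_nonneg).1

variable [DecidableEq n]

lemma re_trace_mul_le_of_norm_le_one {M R : Matrix n n ℂ} (hM : ‖M‖ ≤ 1) (hR : 0 ≤ R) :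
    (M * R).trace.re ≤ R.trace.re := by
  set S := CFC.sqrt R
  have hS : star S = S := (CFC.sqrt_nonneg R).isSelfAdjoint.star_eq
  have hSS : S * S = R := CFC.sqrt_mul_sqrt_self R hR
  have hcycle : (M * R).trace = (S * M * S).trace := by
    rw [← hSS, ← mul_assoc, trace_mul_comm, mul_assoc]
  have hstar : (S * star M * S).trace = star (S * M * S).trace := by
    rw [← trace_conjTranspose, ← star_eq_conjTranspose, star_mul, star_mul, hS, mul_assoc]
  have hre : (S * M * S).trace.re = (S * (ℜ M : Matrix n n ℂ) * S).trace.re := by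
    rw [realPart_apply_coe, mul_smul_comm, smul_mul_assoc, trace_smul, mul_add, add_mul,
      trace_add, hstar, Complex.real_smul, Complex.re_ofReal_mul, Complex.add_re,
      Complex.star_def, Complex.conj_re]
    ring
  have hle : S * (ℜ M : Matrix n n ℂ) * S ≤ ‖ℜ M‖ • R := by
    have h := CStarAlgebra.star_left_conjugate_le_norm_smul (a := S) (ℜ M).2
    rwa [hS, hSS] at h
  calc (M * R).trace.re = (S * (ℜ M : Matrix n n ℂ) * S).trace.re := by rw [hcycle, hre]
    _ ≤ (‖ℜ M‖ • R).trace.re := re_trace_le_re_trace hle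
    _ ≤ R.trace.re := by
      rw [trace_smul, Complex.real_smul, Complex.re_ofReal_mul]
      exact mul_le_of_le_one_left (by simpa using re_trace_le_re_trace hR)
        ((realPart.norm_le M).trans hM)

lemma exists_polar_decomposition (A : Matrix n n ℂ) :
    ∃ V : Matrix n n ℂ, ‖V‖ ≤ 1 ∧ A = V * CFC.abs A ∧ star V * A = CFC.abs A := by
  set P := CFC.abs A
  have hc (f : ℝ → ℝ) : ContinuousOn f (spectrum ℝ P) := P.finite_real_spectrum.continuousOn f
  have hmul (f g : ℝ → ℝ) : cfc f P * cfc g P = cfc (fun t => f t * g t) P :=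
    (cfc_mul f g P (hc f) (hc g)).symm
  have hstar (f : ℝ → ℝ) : star (cfc f P) = cfc f P := (cfc_predicate f P).star_eq
  have hPP : star A * A = cfc (fun t : ℝ => t * t) P := by
    rw [← hmul, cfc_id' ℝ P, CFC.abs_mul_abs]
  have hconj (f : ℝ → ℝ) :
      star (A * cfc f P) * (A * cfc f P) = cfc (fun t => f t * (t * t) * f t) P := by
    rw [star_mul, hstar, ← hmul, ← hmul, ← hPP]
    simp only [mul_assoc]
  -- Since `0⁻¹ = 0`, `cfc (·⁻¹) P` is the Moore–Penrose pseudo-inverse of `P`.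
  refine ⟨A * cfc (fun t : ℝ => t⁻¹) P, ?_, ?_, ?_⟩
  · have h : ‖star (A * cfc (fun t : ℝ => t⁻¹) P) * (A * cfc (fun t : ℝ => t⁻¹) P)‖ ≤ 1 := by
      rw [hconj]
      refine norm_cfc_le zero_le_one fun t _ => ?_
      rcases eq_or_ne t 0 with rfl | ht
      · simp
      · rw [show t⁻¹ * (t * t) * t⁻¹ = 1 by field_simp, norm_one]
    rw [CStarRing.norm_star_mul_self] at h
    nlinarith [norm_nonneg (A * cfc (fun t : ℝ => t⁻¹) P)]
  · have hker : A * cfc (fun t : ℝ => 1 - t⁻¹ * t) P = 0 := by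
      refine (CStarRing.star_mul_self_eq_zero_iff _).mp ?_
      rw [hconj]
      refine (cfc_congr fun t _ => ?_).trans (cfc_zero ℝ P)
      rcases eq_or_ne t 0 with rfl | ht
      · simp
      · simp [ht]
    rw [cfc_sub (fun _ : ℝ => 1) (fun t : ℝ => t⁻¹ * t) P (hc _) (hc _), cfc_const_one ℝ P,
      ← hmul, cfc_id' ℝ P, mul_sub, mul_one, sub_eq_zero] at hker
    rwa [mul_assoc]
  · rw [star_mul, hstar, mul_assoc, hPP, hmul]
    refine (cfc_congr fun t _ => ?_).trans (cfc_id' ℝ P)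
    rcases eq_or_ne t 0 with rfl | ht
    · simp
    · field_simp

end Matrix

section TraceNorm
variable {d : ℕ}

lemma traceNorm_eq_re_trace_abs (A : Md d) : traceNorm A = (CFC.abs A).trace.re := by
  unfold traceNorm CFC.abs
  rw [CFC.sqrt_eq_real_sqrt _ (star_mul_self_nonneg A), cfcₙ_eq_cfc, star_eq_conjTranspose A,
    (posSemidef_conjTranspose_mul_self A).1.cfc_eq]
  rfl

lemma traceNorm_nonneg (A : Md d) : 0 ≤ traceNorm A := by
  simpa [traceNorm_eq_re_trace_abs] using re_trace_le_re_trace (CFC.abs_nonneg A)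

lemma traceNorm_of_nonneg {ρ : Md d} (hρ : 0 ≤ ρ) : traceNorm ρ = ρ.trace.re := by
  rw [traceNorm_eq_re_trace_abs, CFC.abs_of_nonneg ρ hρ]

lemma traceNorm_of_isSelfAdjoint {H : Md d} (hH : IsSelfAdjoint H) :
    traceNorm H = (H⁺).trace.re + (H⁻).trace.re := by
  rw [traceNorm_eq_re_trace_abs, ← CFC.posPart_add_negPart H hH, trace_add, Complex.add_re]

lemma traceNorm_smul (c : ℂ) (A : Md d) : traceNorm (c • A) = ‖c‖ * traceNorm A := by
  simp [traceNorm_eq_re_trace_abs, CFC.abs_smul, trace_smul]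

lemma traceNorm_neg (A : Md d) : traceNorm (-A) = traceNorm A := by
  rw [traceNorm_eq_re_trace_abs, CFC.abs_neg, traceNorm_eq_re_trace_abs]

lemma re_trace_mul_le_traceNorm {C : Md d} (hC : ‖C‖ ≤ 1) (A : Md d) :
    (C * A).trace.re ≤ traceNorm A := by
  obtain ⟨V, hV, hAV, -⟩ := exists_polar_decomposition A
  calc (C * A).trace.re = (C * V * CFC.abs A).trace.re := by rw [mul_assoc, ← hAV]
    _ ≤ traceNorm A := by
      rw [traceNorm_eq_re_trace_abs]
      exact re_trace_mul_le_of_norm_le_one (norm_mul_le_of_le hC hV |>.trans_eq (one_mul 1))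
        (CFC.abs_nonneg A)

lemma exists_re_trace_mul_eq_traceNorm (A : Md d) :
    ∃ W : Md d, ‖W‖ ≤ 1 ∧ (W * A).trace.re = traceNorm A := by
  obtain ⟨V, hV, -, hVA⟩ := exists_polar_decomposition A
  exact ⟨star V, by rwa [norm_star], by rw [hVA, traceNorm_eq_re_trace_abs]⟩

lemma traceNorm_add_le (A B : Md d) : traceNorm (A + B) ≤ traceNorm A + traceNorm B := by
  obtain ⟨W, hW, hWAB⟩ := exists_re_trace_mul_eq_traceNorm (A + B)
  rw [← hWAB, mul_add, trace_add, Complex.add_re]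
  exact add_le_add (re_trace_mul_le_traceNorm hW A) (re_trace_mul_le_traceNorm hW B)

lemma traceNorm_sum_le {ι : Type*} (s : Finset ι) (F : ι → Md d) :
    traceNorm (∑ i ∈ s, F i) ≤ ∑ i ∈ s, traceNorm (F i) :=
  Finset.le_sum_of_subadditive traceNorm (by simp [traceNorm_eq_re_trace_abs]) traceNorm_add_le s F

lemma traceNorm_star (A : Md d) : traceNorm (star A) = traceNorm A := by
  suffices h : ∀ B : Md d, traceNorm (star B) ≤ traceNorm B from
    (h A).antisymm (by simpa using h (star A))
  intro B
  obtain ⟨W, hW, hWB⟩ := exists_re_trace_mul_eq_traceNorm (star B)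
  rw [← hWB, ← star_star W, ← star_mul, star_eq_conjTranspose, trace_conjTranspose,
    Complex.star_def, Complex.conj_re, trace_mul_comm]
  exact re_trace_mul_le_traceNorm (by rwa [norm_star]) B

lemma traceNorm_realPart_le (A : Md d) : traceNorm (ℜ A : Md d) ≤ traceNorm A := by
  rw [realPart_apply_coe, ← Complex.coe_smul, traceNorm_smul, Complex.norm_real,
    Real.norm_of_nonneg (by norm_num)]
  linarith [traceNorm_add_le A (star A), traceNorm_star A]

lemma traceNorm_imaginaryPart_le (A : Md d) : traceNorm (ℑ A : Md d) ≤ traceNorm A := by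
  have h := traceNorm_realPart_le (Complex.I • A)
  rwa [realPart_I_smul, NegMemClass.coe_neg, traceNorm_neg, traceNorm_smul, Complex.norm_I,
    one_mul] at h

end TraceNorm

section Channels
variable {d : ℕ}

lemma map_vecMulVec_eq_conjTranspose_mul_choiMatrix_mul (T : Md d →ₗ[ℂ] Md d) (v : Fin d → ℂ) :
    T (vecMulVec v (star v)) =
      (of fun (a : Fin d × Fin d) q => if a.2 = q then star (v a.1) else 0)ᴴ * choiMatrix T *
        of fun (a : Fin d × Fin d) q => if a.2 = q then star (v a.1) else 0 := by
  have hsingle (i k : Fin d) :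
      single i k (vecMulVec v (star v) i k) = vecMulVec v (star v) i k • single i k 1 := by
    rw [smul_single, smul_eq_mul, mul_one]
  conv_lhs => rw [matrix_eq_sum_single (vecMulVec v (star v))]
  ext p q
  simp only [hsingle, map_sum, map_smul, Matrix.sum_apply]
  simp only [vecMulVec_apply, Pi.star_apply, RCLike.star_def, Matrix.smul_apply, smul_eq_mul, mul_apply,
    conjTranspose_apply, of_apply, apply_ite, RingHomCompTriple.comp_apply, RingHom.id_apply,
    star_zero, choiMatrix, ite_mul, zero_mul, Fintype.sum_prod_type, Finset.sum_ite_eq',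
    Finset.mem_univ, ↓reduceIte, Finset.sum_mul, mul_zero]
  rw [Finset.sum_comm]
  exact Finset.sum_congr rfl fun i _ => Finset.sum_congr rfl fun k _ => by ring

lemma IsCompletelyPositive.map_nonneg {T : Md d →ₗ[ℂ] Md d} (hT : IsCompletelyPositive T)
    {ρ : Md d} (hρ : 0 ≤ ρ) : 0 ≤ T ρ := by
  obtain ⟨m, v, rfl⟩ := posSemidef_iff_eq_sum_vecMulVec.mp hρ.posSemidef
  rw [map_sum]
  exact Finset.sum_nonneg fun j _ => by
    rw [map_vecMulVec_eq_conjTranspose_mul_choiMatrix_mul]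
    exact (hT.conjTranspose_mul_mul_same _).nonneg

end Channels

section PositiveTracePreserving
variable {d : ℕ}

structure IsPositiveTracePreserving (Φ : Module.End ℂ (Md d)) : Prop where
  map_nonneg : ∀ ρ : Md d, 0 ≤ ρ → 0 ≤ Φ ρ
  trace_map : IsTracePreserving Φ

namespace IsPositiveTracePreserving

lemma mul {Φ Ψ : Module.End ℂ (Md d)} (hΦ : IsPositiveTracePreserving Φ)
    (hΨ : IsPositiveTracePreserving Ψ) : IsPositiveTracePreserving (Φ * Ψ) :=
  ⟨fun ρ hρ => hΦ.map_nonneg _ (hΨ.map_nonneg ρ hρ), fun X => (hΦ.trace_map _).trans (hΨ.trace_map X)⟩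

lemma list_prod {l : List (Module.End ℂ (Md d))} (h : ∀ Φ ∈ l, IsPositiveTracePreserving Φ) :
    IsPositiveTracePreserving l.prod :=
  List.prod_induction _ (fun _ _ => mul) ⟨fun _ hρ => hρ, fun _ => rfl⟩ h

lemma traceNorm_map_le {Φ : Module.End ℂ (Md d)} (hΦ : IsPositiveTracePreserving Φ) {H : Md d}
    (hH : IsSelfAdjoint H) : traceNorm (Φ H) ≤ traceNorm H := by
  have hpos := hΦ.map_nonneg _ (CFC.posPart_nonneg H)
  have hneg := hΦ.map_nonneg _ (CFC.negPart_nonneg H)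
  calc traceNorm (Φ H) = traceNorm (Φ H⁺ + -Φ H⁻) := by
        rw [← sub_eq_add_neg, ← map_sub, CFC.posPart_sub_negPart H hH]
    _ ≤ traceNorm (Φ H⁺) + traceNorm (Φ H⁻) := by
        simpa only [traceNorm_neg] using traceNorm_add_le (Φ H⁺) (-Φ H⁻)
    _ = traceNorm H := by
        rw [traceNorm_of_nonneg hpos, traceNorm_of_nonneg hneg, hΦ.trace_map, hΦ.trace_map,
          traceNorm_of_isSelfAdjoint hH]

end IsPositiveTracePreserving

lemma IsQuantumChannel.isPositiveTracePreserving {T : Md d →ₗ[ℂ] Md d}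
    (hT : IsQuantumChannel T) : IsPositiveTracePreserving T :=
  ⟨fun _ => hT.1.map_nonneg, hT.2⟩

lemma isPositiveTracePreserving_conjMap {V : Md d} (hV : V ∈ unitaryGroup (Fin d) ℂ) :
    IsPositiveTracePreserving (conjMap V) where
  map_nonneg ρ hρ := (hρ.posSemidef.mul_mul_conjTranspose_same V).nonneg
  trace_map X := by
    change (V * X * Vᴴ).trace = X.trace
    rw [trace_mul_cycle, ← star_eq_conjTranspose, Unitary.star_mul_self_of_mem hV, one_mul]

lemma traceNorm_map_le_two_mul_of_isSelfAdjoint {Ψ : Md d →ₗ[ℂ] Md d} {c : ℝ} (hc : 0 ≤ c)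
    (h : ∀ H : Md d, IsSelfAdjoint H → traceNorm (Ψ H) ≤ c * traceNorm H) (X : Md d) :
    traceNorm (Ψ X) ≤ 2 * c * traceNorm X := by
  have hre := h _ (ℜ X).2
  have him := h _ (ℑ X).2
  calc traceNorm (Ψ X) = traceNorm (Ψ (ℜ X) + Complex.I • Ψ (ℑ X)) := by
        rw [← map_smul, ← map_add, realPart_add_I_smul_imaginaryPart]
    _ ≤ c * traceNorm (ℜ X : Md d) + c * traceNorm (ℑ X : Md d) := by
        refine (traceNorm_add_le _ _).trans ?_
        rw [traceNorm_smul, Complex.norm_I, one_mul]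
        exact add_le_add hre him
    _ ≤ 2 * c * traceNorm X := by
        nlinarith [traceNorm_realPart_le X, traceNorm_imaginaryPart_le X]

lemma norm11_le {Φ : Md d →ₗ[ℂ] Md d} {B : ℝ} (hB : 0 ≤ B)
    (h : ∀ X : Md d, traceNorm (Φ X) ≤ B * traceNorm X) : norm11 Φ ≤ B := by
  refine Real.sSup_le ?_ hB
  rintro _ ⟨X, -, rfl⟩
  exact div_le_of_le_mul₀ (traceNorm_nonneg X) hB (h X)

lemma norm11_sum_smul_le {ι : Type*} [Fintype ι] {Φ : ι → Module.End ℂ (Md d)}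
    (hΦ : ∀ i, IsPositiveTracePreserving (Φ i)) (c : ι → ℝ) :
    norm11 (∑ i, (c i : ℂ) • Φ i) ≤ 2 * ∑ i, |c i| := by
  have hc : 0 ≤ ∑ i, |c i| := Finset.sum_nonneg fun i _ => abs_nonneg (c i)
  refine norm11_le (by positivity) (traceNorm_map_le_two_mul_of_isSelfAdjoint hc fun H hH => ?_)
  calc traceNorm ((∑ i, (c i : ℂ) • Φ i) H) ≤ ∑ i, traceNorm ((c i : ℂ) • Φ i H) := by
        simpa using traceNorm_sum_le Finset.univ fun i => (c i : ℂ) • Φ i H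
    _ ≤ ∑ i, |c i| * traceNorm H := Finset.sum_le_sum fun i _ => by
        rw [traceNorm_smul, Complex.norm_real, Real.norm_eq_abs]
        exact mul_le_mul_of_nonneg_left ((hΦ i).traceNorm_map_le hH) (abs_nonneg _)
    _ = (∑ i, |c i|) * traceNorm H := Finset.sum_mul .. |>.symm

end PositiveTracePreserving

lemma sum_pow_eq_sum_prod_ofFn {R ι : Type*} [Semiring R] [Fintype ι] (a : ι → R) (m : ℕ) :
    (∑ i, a i) ^ m = ∑ f : Fin m → ι, (List.ofFn fun k => a (f k)).prod := by
  induction m with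
  | zero => simp
  | succ m ih =>
    rw [pow_succ', ih, Finset.sum_mul_sum, ← Finset.sum_product']
    refine Fintype.sum_equiv (Fin.consEquiv fun _ => ι) _ _ fun p => ?_
    simp [Fin.consEquiv, List.ofFn_succ]

section Twirl
variable {d : ℕ} {G : Type*} [Group G]

lemma isPositiveTracePreserving_seqStep (U : UnitaryRep G d) {T : Md d →ₗ[ℂ] Md d}
    (hT : IsQuantumChannel T) (g : G) : IsPositiveTracePreserving (seqStep U T g) :=
  ((isPositiveTracePreserving_conjMap (U g).2).mul hT.isPositiveTracePreserving).mul
    (isPositiveTracePreserving_conjMap (star (U g)).2)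

variable [Fintype G]

lemma twirl_eq_smul_sum_seqStep (U : UnitaryRep G d) (T : Md d →ₗ[ℂ] Md d) :
    (twirl U T : Module.End ℂ (Md d)) = (Fintype.card G : ℂ)⁻¹ • ∑ g, seqStep U T g := by
  rw [twirl]
  congr 1
  refine Fintype.sum_equiv (Equiv.inv G) _ _ fun g => ?_
  simp only [seqStep, Equiv.inv_apply, map_inv, ← Unitary.star_eq_inv, Unitary.coe_star,
    star_eq_conjTranspose, conjTranspose_conjTranspose]
  rfl

lemma twirl_pow_eq_nuTwirl_uniformPMF (U : UnitaryRep G d) (T : Md d →ₗ[ℂ] Md d) (m : ℕ) :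
    (twirl U T : Module.End ℂ (Md d)) ^ m = nuTwirl U T (uniformPMF (Fin m → G)) := by
  rw [twirl_eq_smul_sum_seqStep, smul_pow, sum_pow_eq_sum_prod_ofFn, Finset.smul_sum, nuTwirl]
  simp [uniformPMF, inv_pow]

lemma nuTwirl_sub {m : ℕ} (U : UnitaryRep G d) (T : Md d →ₗ[ℂ] Md d) (ν μ : (Fin m → G) → ℝ) :
    nuTwirl U T ν - nuTwirl U T μ = nuTwirl U T (ν - μ) := by
  simp only [nuTwirl, ← Finset.sum_sub_distrib, Pi.sub_apply, Complex.ofReal_sub]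
  exact Finset.sum_congr rfl fun f _ => (sub_smul _ _ _).symm

lemma norm11_nuTwirl_sub_le {m : ℕ} (U : UnitaryRep G d) {T : Md d →ₗ[ℂ] Md d}
    (hT : IsQuantumChannel T) (ν μ : (Fin m → G) → ℝ) :
    norm11 (nuTwirl U T ν - nuTwirl U T μ) ≤ 4 * tvDist ν μ := by
  rw [nuTwirl_sub, tvDist]
  refine (norm11_sum_smul_le (fun f => IsPositiveTracePreserving.list_prod fun Φ hΦ => ?_)
    _).trans_eq (by simp only [Pi.sub_apply]; ring)
  obtain ⟨k, rfl⟩ := List.mem_ofFn.mp hΦ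
  exact isPositiveTracePreserving_seqStep U hT _

end Twirl

lemma one_le_log_div_one_sub_inv {x : ℝ} (hx : 1 < x) : 1 ≤ Real.log x / (1 - x⁻¹) := by
  rw [one_le_div (by linarith [inv_lt_one_of_one_lt₀ hx])]
  exact Real.one_sub_inv_le_log_of_pos (by linarith)

section TotalVariation
variable {S : Type*} [Fintype S]

lemma tvDist_le_one {μ ν : S → ℝ} (hμ : IsProb μ) (hν : IsProb ν) : tvDist μ ν ≤ 1 := by
  have h : ∑ s, |μ s - ν s| ≤ ∑ s, (μ s + ν s) := Finset.sum_le_sum fun s _ => by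
    simpa [abs_of_nonneg (hμ.1 s), abs_of_nonneg (hν.1 s)] using abs_sub (μ s) (ν s)
  rw [Finset.sum_add_distrib, hμ.2, hν.2] at h
  rw [tvDist]
  linarith

lemma tvDist_eq_zero_of_subsingleton [Subsingleton S] {μ ν : S → ℝ} (hμ : IsProb μ)
    (hν : IsProb ν) : tvDist μ ν = 0 := by
  rcases isEmpty_or_nonempty S with hS | ⟨⟨s⟩⟩
  · simp [tvDist]
  · have hμs := hμ.2
    have hνs := hν.2
    rw [Fintype.sum_subsingleton _ s] at hμs hνs
    simp [tvDist, Fintype.sum_subsingleton _ s, hμs, hνs]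

lemma tvDist_comp_bijective {R : Type*} [Fintype R] {e : R → S} (he : Function.Bijective e)
    (μ ν : S → ℝ) : tvDist (μ ∘ e) (ν ∘ e) = tvDist μ ν := by
  simp only [tvDist, Function.comp_apply, he.sum_comp fun s => |μ s - ν s|]

lemma IsProb.pi {m : ℕ} {ν : Fin m → S → ℝ} (hν : ∀ k, IsProb (ν k)) :
    IsProb fun g : Fin m → S => ∏ k, ν k (g k) :=
  ⟨fun g => Finset.prod_nonneg fun k _ => (hν k).1 _, by
    rw [← Fintype.prod_sum]; exact Finset.prod_eq_one fun k _ => (hν k).2⟩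

lemma isProb_uniformPMF [Nonempty S] : IsProb (uniformPMF S) :=
  ⟨fun _ => inv_nonneg.mpr (Nat.cast_nonneg _), by simp [uniformPMF]⟩

lemma tvDist_pi_le_sum {m : ℕ} {ν μ : Fin m → S → ℝ} (hν : ∀ k, IsProb (ν k))
    (hμ : ∀ k, IsProb (μ k)) :
    tvDist (fun g : Fin m → S => ∏ k, ν k (g k)) (fun g => ∏ k, μ k (g k)) ≤
      ∑ k, tvDist (ν k) (μ k) := by
  induction m with
  | zero => simp [tvDist]
  | succ m ih =>
    set A : (Fin m → S) → ℝ := fun f => ∏ k, ν k.succ (f k)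
    set B : (Fin m → S) → ℝ := fun f => ∏ k, μ k.succ (f k)
    have hB : IsProb B := IsProb.pi fun k => hμ k.succ
    have hsplit (F : (Fin (m + 1) → S) → ℝ) :
        ∑ g, F g = ∑ x, ∑ f : Fin m → S, F (Fin.cons x f) := by
      rw [← Fintype.sum_prod_type']
      exact (Fintype.sum_equiv (Fin.consEquiv fun _ => S) _ _ fun _ => rfl).symm
    have hterm (x : S) (f : Fin m → S) :
        |ν 0 x * A f - μ 0 x * B f| ≤ ν 0 x * |A f - B f| + B f * |ν 0 x - μ 0 x| := by
      have := abs_add_le (ν 0 x * (A f - B f)) (B f * (ν 0 x - μ 0 x))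
      rwa [abs_mul, abs_mul, abs_of_nonneg ((hν 0).1 x), abs_of_nonneg (hB.1 f),
        show ν 0 x * (A f - B f) + B f * (ν 0 x - μ 0 x) = ν 0 x * A f - μ 0 x * B f by ring]
        at this
    have hsum : ∑ x, ∑ f, |ν 0 x * A f - μ 0 x * B f| ≤
        ∑ f, |A f - B f| + ∑ x, |ν 0 x - μ 0 x| := by
      refine (Finset.sum_le_sum fun x _ => Finset.sum_le_sum fun f _ => hterm x f).trans_eq ?_
      simp only [Finset.sum_add_distrib, ← Finset.mul_sum, ← Finset.sum_mul, hB.2, (hν 0).2,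
        one_mul]
    have := ih (fun k => hν k.succ) (fun k => hμ k.succ)
    simp only [tvDist, Fin.sum_univ_succ] at this ⊢
    rw [hsplit]
    simp only [Fin.prod_univ_succ, Fin.cons_zero, Fin.cons_succ]
    linarith

lemma tvDist_pi_uniformPMF_le_sqrt [Nonempty S] {m : ℕ}
    {ν : Fin m → S → ℝ} (hν : ∀ k, IsProb (ν k)) {ε : Fin m → ℝ}
    (hε : ∀ k, tvDist (ν k) (uniformPMF S) ≤ ε k) :
    tvDist (fun g : Fin m → S => ∏ k, ν k (g k)) (fun g => ∏ k, uniformPMF S (g k)) ≤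
      Real.sqrt ((Real.log (Fintype.card S) / (1 - (Fintype.card S : ℝ)⁻¹)) * ∑ k, ε k) := by
  set t := tvDist (fun g : Fin m → S => ∏ k, ν k (g k)) (fun g => ∏ k, uniformPMF S (g k))
  have hu : ∀ _ : Fin m, IsProb (uniformPMF S) := fun _ => isProb_uniformPMF
  have ht0 : 0 ≤ t := by unfold t tvDist; positivity
  have ht1 : t ≤ 1 := tvDist_le_one (IsProb.pi hν) (IsProb.pi hu)
  have htv : t ≤ ∑ k, tvDist (ν k) (uniformPMF S) := tvDist_pi_le_sum hν hu
  have htC : t ≤ Real.log (Fintype.card S) / (1 - (Fintype.card S : ℝ)⁻¹) * ∑ k, ε k := by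
    rcases Nat.one_le_iff_ne_zero.mpr (Fintype.card_ne_zero (α := S)) |>.eq_or_lt with hS | hS
    · have : Subsingleton S := Fintype.card_le_one_iff_subsingleton.mp hS.ge
      simp only [tvDist_eq_zero_of_subsingleton (hν _) (isProb_uniformPMF),
        Finset.sum_const_zero] at htv
      simp [← hS, htv.antisymm ht0]
    · have hE : t ≤ ∑ k, ε k := htv.trans (Finset.sum_le_sum fun k _ => hε k)
      have hC := one_le_log_div_one_sub_inv (Nat.one_lt_cast.mpr hS)
      nlinarith
  calc t ≤ Real.sqrt t := Real.le_sqrt_of_sq_le (by nlinarith)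
    _ ≤ _ := Real.sqrt_le_sqrt htC

end TotalVariation

section RandomWalk
variable {G : Type*} [Group G]

def increments {m : ℕ} (h : Fin m → G) : Fin m → G := fun k =>
  h k * (if _hk : (k : ℕ) = 0 then (1 : G)
    else (h ⟨(k : ℕ) - 1, Nat.lt_of_le_of_lt (Nat.sub_le _ _) k.isLt⟩)⁻¹)

lemma increments_injective {m : ℕ} : Function.Injective (increments (G := G) (m := m)) := by
  intro h₁ h₂ heq
  suffices ∀ n (hn : n < m), h₁ ⟨n, hn⟩ = h₂ ⟨n, hn⟩ from funext fun k => this k k.2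
  intro n
  induction n with
  | zero => intro hn; simpa [increments] using congrFun heq ⟨0, hn⟩
  | succ n ih =>
    intro hn
    have h := congrFun heq ⟨n + 1, hn⟩
    simp only [increments, Nat.add_one_ne_zero, dite_false, Nat.add_sub_cancel,
      ih (Nat.lt_of_succ_lt hn)] at h
    exact mul_right_cancel h

variable [Fintype G]

lemma tvDist_walkLaw_uniformPMF {m : ℕ} (ν : Fin m → G → ℝ) :
    tvDist (walkLaw ν) (uniformPMF (Fin m → G)) =
      tvDist (fun g : Fin m → G => ∏ k, ν k (g k)) fun g => ∏ k, uniformPMF G (g k) := by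
  have hbij : Function.Bijective (increments (G := G) (m := m)) :=
    Finite.injective_iff_bijective.mp increments_injective
  refine Eq.trans ?_ (tvDist_comp_bijective hbij _ _)
  congr 1
  ext g
  simp [uniformPMF]

end RandomWalk

end

/-- Randomized benchmarking with approximate samples: if each increment law is
`ε_k`-close to Haar in total variation, then the resulting sequence twirl is close
to the m-th power of the Haar twirl in the `1→1` norm. -/
theorem approx_samples_twirl_bound {d m : ℕ} {G : Type*} [Group G] [Fintype G]
    (U : UnitaryRep G d) (T : Md d →ₗ[ℂ] Md d) (hT : IsQuantumChannel T)
    (ν : Fin m → G → ℝ) (hν : ∀ k, IsProb (ν k))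
    (ε : Fin m → ℝ) (hε : ∀ k, tvDist (ν k) (uniformPMF G) ≤ ε k) :
    norm11 (nuTwirl U T (walkLaw ν) - ((twirl U T : Module.End ℂ (Md d)) ^ m)) ≤
      4 * Real.sqrt
        ((Real.log (Fintype.card G) / (1 - (Fintype.card G : ℝ)⁻¹)) *
          ∑ k : Fin m, ε k) := by
  rw [twirl_pow_eq_nuTwirl_uniformPMF]
  refine (norm11_nuTwirl_sub_le U hT _ _).trans ?_
  rw [tvDist_walkLaw_uniformPMF]
  gcongr
  exact tvDist_pi_uniformPMF_le_sqrt hν hε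
end

section
/- Let n ≥ 3 and let T : M_d → M_d be a quantum channel covariant with respect to the group MU(d,n) of monomial unitaries with n-th root-of-unity entries: T(UρU†) = U T(ρ) U† for all U ∈ MU(d,n). Then there exist α, β ∈ R such that T(X) = Tr(X)·I/d + α·(X − Δ(X)) + β·(Δ(X) − Tr(X)·I/d), where Δ(X) = Σ_{i=1}^d ⟨i|X|i⟩ |i⟩⟨i| is the diagonal pinching. -/
open scoped Matrix ComplexOrder
open Matrix

noncomputable section
variable {d : ℕ}

/-- The diagonal pinching `Δ(X) = ∑ᵢ ⟨i|X|i⟩ |i⟩⟨i|` as a linear map. -/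
def pinchMap (d : ℕ) : Md d →ₗ[ℂ] Md d where
  toFun X := Matrix.diagonal fun i => X i i
  map_add' X Y := by
    ext i j
    by_cases h : i = j <;> simp [Matrix.diagonal, h]
  map_smul' c X := by
    ext i j
    by_cases h : i = j <;> simp [Matrix.diagonal, h]

/-- The map `X ↦ Tr(X)·I/d` as a linear map. -/
def traceProj (d : ℕ) : Md d →ₗ[ℂ] Md d :=
  LinearMap.smulRight (Matrix.traceLinearMap (Fin d) ℂ ℂ) (((d : ℂ))⁻¹ • (1 : Md d))

/-- The MU(d,n)-covariant map
`T(X) = Tr(X)·I/d + α(X − Δ(X)) + β(Δ(X) − Tr(X)·I/d)`. -/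
def monomialMap (d : ℕ) (α β : ℝ) : Md d →ₗ[ℂ] Md d :=
  traceProj d + (α : ℂ) • (LinearMap.id - pinchMap d) + (β : ℂ) • (pinchMap d - traceProj d)

/-- Membership in `MU(d,n)`: a product `DP` of a diagonal matrix whose entries are
n-th roots of unity and a permutation matrix. -/
def MemMU (d n : ℕ) (V : Md d) : Prop :=
  ∃ (π : Equiv.Perm (Fin d)) (φ : Fin d → ℂ), (∀ i, φ i ^ n = 1) ∧
    V = Matrix.of fun i j => if i = π j then φ i else 0

end

/-!
Covariance under a diagonal unitary `diag φ` forces `φ i φ̄ j = φ k φ̄ l` wherever the `(k, l)`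
entry of `T |i⟩⟨j|` is nonzero. Phases that are `n`-th roots of unity on a single site separate,
for `n ≥ 3`, every index pattern except `(k, l) = (i, j)` and `i = j, k = l`; so `T |i⟩⟨j|` is a
multiple of `|i⟩⟨j|` for `i ≠ j` and `T |i⟩⟨i|` is diagonal. Permutation covariance makes the
coefficients depend only on which indices coincide, hermiticity of the Choi matrix makes them
real, and trace preservation ties the two diagonal coefficients together.
-/

section Combinatorics

variable {α : Type*} [DecidableEq α]

lemma Equiv.Perm.exists_apply_eq_and_apply_eq {x y i j : α} (hxy : x ≠ y) (hij : i ≠ j) :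
    ∃ σ : Equiv.Perm α, σ x = i ∧ σ y = j := by
  refine ⟨Equiv.swap x i * Equiv.swap y (Equiv.swap x i j), ?_, ?_⟩
  · have hx : x ≠ Equiv.swap x i j := fun h => hij <| by
      simpa using congrArg (Equiv.swap x i) h
    simp [Equiv.swap_apply_of_ne_of_ne hxy hx]
  · simp

lemma exists_forall_eq_of_perm_invariant {β : Type*} [Nonempty β] {f : α → β}
    (hf : ∀ (σ : Equiv.Perm α) i, f (σ i) = f i) : ∃ c, ∀ i, f i = c := by
  rcases isEmpty_or_nonempty α with hα | ⟨⟨i₀⟩⟩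
  · exact ⟨Classical.arbitrary β, fun i => isEmptyElim i⟩
  · exact ⟨f i₀, fun i => by simpa using hf (Equiv.swap i₀ i) i₀⟩

lemma exists_forall_ne_eq_of_perm_invariant {β : Type*} [Nonempty β] {f : α → α → β}
    (hf : ∀ (σ : Equiv.Perm α) i j, f (σ i) (σ j) = f i j) :
    ∃ c, ∀ i j, i ≠ j → f i j = c := by
  rcases subsingleton_or_nontrivial α with hα | hα
  · exact ⟨Classical.arbitrary β, fun i j hij => absurd (Subsingleton.elim i j) hij⟩
  · obtain ⟨i₀, j₀, h₀⟩ := exists_pair_ne α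
    refine ⟨f i₀ j₀, fun i j hij => ?_⟩
    obtain ⟨σ, rfl, rfl⟩ := Equiv.Perm.exists_apply_eq_and_apply_eq h₀ hij
    exact hf σ i₀ j₀

lemma eq_and_eq_or_eq_and_eq_of_single_sub_single {i j k l : α}
    (h : (Pi.single i 1 - Pi.single j 1 : α → ℤ) = Pi.single k 1 - Pi.single l 1) :
    (i = k ∧ j = l) ∨ (i = j ∧ k = l) := by
  have hm (m : α) := congrFun h m
  simp only [Pi.sub_apply, Pi.single_apply] at hm
  by_cases hij : i = j
  · subst hij
    refine .inr ⟨rfl, by_contra fun hkl => ?_⟩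
    simpa [hkl] using hm k
  · have hi := hm i
    have hj := hm j
    simp only [if_neg hij, if_neg (Ne.symm hij), if_true] at hi hj
    refine .inl ⟨?_, ?_⟩ <;> by_contra hne
    · simp only [if_neg hne] at hi; split_ifs at hi <;> omega
    · simp only [if_neg hne] at hj; split_ifs at hj <;> omega

end Combinatorics

lemma IsPrimitiveRoot.eq_zero_of_zpow_eq_one {M : Type*} [DivisionCommMonoid M] {ζ : M} {n : ℕ}
    (hζ : IsPrimitiveRoot ζ n) {a : ℤ} (ha : |a| < n) (h : ζ ^ a = 1) : a = 0 :=
  Int.eq_zero_of_abs_lt_dvd ((hζ.zpow_eq_one_iff_dvd a).mp h) ha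

namespace Matrix

variable {ι R : Type*} [Fintype ι] [DecidableEq ι]

lemma diagonal_mul_mul_conjTranspose_diagonal_apply [Semiring R] [StarRing R] (φ : ι → R)
    (X : Matrix ι ι R) (k l : ι) :
    (diagonal φ * X * (diagonal φ)ᴴ) k l = φ k * X k l * star (φ l) := by
  simp [diagonal_conjTranspose]

lemma diagonal_mul_single_mul_conjTranspose_diagonal [Semiring R] [StarRing R] (φ : ι → R)
    (i j : ι) (r : R) :
    diagonal φ * single i j r * (diagonal φ)ᴴ = single i j (φ i * r * star (φ j)) := by
  ext k l
  rw [diagonal_mul_mul_conjTranspose_diagonal_apply]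
  by_cases h : i = k ∧ j = l
  · obtain ⟨rfl, rfl⟩ := h
    simp
  · simp [h]

lemma permMatrix_mul_mul_conjTranspose_permMatrix [NonAssocSemiring R] [StarRing R]
    (σ : Equiv.Perm ι) (X : Matrix ι ι R) :
    σ.permMatrix R * X * (σ.permMatrix R)ᴴ = X.submatrix σ σ := by
  rw [conjTranspose_permMatrix, PEquiv.toMatrix_toPEquiv_mul, PEquiv.mul_toMatrix_toPEquiv,
    submatrix_submatrix]
  rfl

end Matrix

lemma memMU_diagonal {d n : ℕ} {φ : Fin d → ℂ} (hφ : ∀ i, φ i ^ n = 1) :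
    MemMU d n (diagonal φ) :=
  ⟨1, φ, hφ, by ext i j; by_cases h : i = j <;> simp [h]⟩

lemma memMU_permMatrix {d : ℕ} (n : ℕ) (σ : Equiv.Perm (Fin d)) :
    MemMU d n (σ.permMatrix ℂ) :=
  ⟨σ.symm, 1, fun _ => one_pow n, by ext i j; simp [PEquiv.toMatrix_apply, Equiv.eq_symm_apply]⟩

lemma monomialMap_single_of_ne {d : ℕ} (α β : ℝ) {i j : Fin d} (hij : i ≠ j) :
    monomialMap d α β (single i j 1) = (α : ℂ) • single i j 1 := by
  have hpinch : pinchMap d (single i j 1) = 0 := by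
    ext k l
    simp only [pinchMap, LinearMap.coe_mk, AddHom.coe_mk, single_apply, diagonal_apply,
      Matrix.zero_apply]
    grind
  simp [monomialMap, traceProj, hpinch, trace_single_eq_of_ne _ _ _ hij]

lemma monomialMap_single_self {d : ℕ} (α β : ℝ) (i : Fin d) :
    monomialMap d α β (single i i 1) = ((1 - β) / d : ℂ) • 1 + (β : ℂ) • single i i 1 := by
  have hpinch : pinchMap d (single i i 1) = single i i 1 := by
    ext k l
    simp only [pinchMap, LinearMap.coe_mk, AddHom.coe_mk, single_apply, diagonal_apply]
    grind
  simp only [monomialMap, traceProj, LinearMap.add_apply, LinearMap.smul_apply,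
    LinearMap.sub_apply, LinearMap.id_apply, LinearMap.smulRight_apply, traceLinearMap_apply,
    trace_single_eq_same, hpinch, sub_self, smul_zero, add_zero, one_smul]
  module

section Covariance

variable {d : ℕ} {T : Md d →ₗ[ℂ] Md d}

lemma IsCompletelyPositive.conjTranspose_map_single (hT : IsCompletelyPositive T) (i j : Fin d) :
    (T (single i j 1))ᴴ = T (single j i 1) := by
  ext k l
  exact congrFun₂ hT.isHermitian (j, k) (i, l)

lemma map_single_apply_perm
    (hperm : ∀ (σ : Equiv.Perm (Fin d)) X, T (X.submatrix σ σ) = (T X).submatrix σ σ)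
    (σ : Equiv.Perm (Fin d)) (i j k l : Fin d) :
    T (single (σ i) (σ j) 1) (σ k) (σ l) = T (single i j 1) k l := by
  simpa using (congrFun₂ (hperm σ (single (σ i) (σ j) 1)) k l).symm

lemma phase_mul_map_single_apply {φ : Fin d → ℂ}
    (hφ : ∀ X, T (diagonal φ * X * (diagonal φ)ᴴ) = diagonal φ * T X * (diagonal φ)ᴴ)
    (i j k l : Fin d) :
    φ i * star (φ j) * T (single i j 1) k l = φ k * star (φ l) * T (single i j 1) k l := by
  have h := congrFun₂ (hφ (single i j 1)) k l
  rw [diagonal_mul_single_mul_conjTranspose_diagonal, mul_one, ← mul_one (φ i * star (φ j)),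
    ← smul_eq_mul, ← smul_single, map_smul, diagonal_mul_mul_conjTranspose_diagonal_apply] at h
  simpa [mul_right_comm] using h

lemma eq_and_eq_or_eq_and_eq_of_map_single_apply_ne_zero {n : ℕ} (hn : 3 ≤ n)
    (hdiag : ∀ φ : Fin d → ℂ, (∀ i, φ i ^ n = 1) →
      ∀ X, T (diagonal φ * X * (diagonal φ)ᴴ) = diagonal φ * T X * (diagonal φ)ᴴ)
    {i j k l : Fin d} (hne : T (single i j 1) k l ≠ 0) :
    (i = k ∧ j = l) ∨ (i = j ∧ k = l) := by
  set ζ : ℂ := Complex.exp (2 * Real.pi * Complex.I / n)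
  have hζ : IsPrimitiveRoot ζ n := Complex.isPrimitiveRoot_exp n (by omega)
  have hζ₀ : ζ ≠ 0 := hζ.ne_zero (by omega)
  have hstar (a : ℤ) : star (ζ ^ a) = ζ ^ (-a) := by
    rw [star_zpow₀, _root_.zpow_neg, Complex.star_def,
      ← Complex.inv_eq_conj (hζ.norm'_eq_one (by omega)), _root_.inv_zpow]
  apply eq_and_eq_or_eq_and_eq_of_single_sub_single
  ext m
  -- Put the phase `ζ` on the single site `m`: the resulting exponent `e i - e j - (e k - e l)`
  -- lies in `[-2, 2]`, so `n ≥ 3` forces it to vanish.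
  set e : Fin d → ℤ := fun x => (Pi.single x 1 : Fin d → ℤ) m
  have he (x : Fin d) : 0 ≤ e x ∧ e x ≤ 1 := by
    simp only [e, Pi.single_apply]
    split_ifs <;> simp
  have hphase := mul_right_cancel₀ hne <|
    phase_mul_map_single_apply (hdiag (fun x => ζ ^ e x) fun x => by
      rw [← zpow_natCast, ← _root_.zpow_mul, mul_comm, _root_.zpow_mul, zpow_natCast,
        hζ.pow_eq_one, _root_.one_zpow])
      i j k l
  simp only [hstar, ← zpow_add₀ hζ₀] at hphase
  have hzero := hζ.eq_zero_of_zpow_eq_one (a := e i + -e j - (e k + -e l)) ?_ <| by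
    rw [zpow_sub₀ hζ₀, hphase, div_self (zpow_ne_zero _ hζ₀)]
  · simp only [Pi.sub_apply]
    linear_combination hzero
  · have := he i; have := he j; have := he k; have := he l
    rw [abs_lt]
    constructor <;> omega

variable
    (hsupp : ∀ i j k l, T (single i j 1) k l ≠ 0 → (i = k ∧ j = l) ∨ (i = j ∧ k = l))
    (hCP : IsCompletelyPositive T)
    (hperm : ∀ (σ : Equiv.Perm (Fin d)) X, T (X.submatrix σ σ) = (T X).submatrix σ σ)
include hsupp hCP hperm

lemma exists_map_single_of_ne_eq_smul :
    ∃ α : ℝ, ∀ i j, i ≠ j → T (single i j 1) = (α : ℂ) • single i j 1 := by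
  obtain ⟨α, hα⟩ := exists_forall_ne_eq_of_perm_invariant
    (f := fun i j => (T (single i j 1) i j).re) fun σ i j => by
      simp only [map_single_apply_perm hperm]
  refine ⟨α, fun i j hij => ?_⟩
  have hreal : star (T (single i j 1) i j) = T (single i j 1) i j := calc
    _ = T (single j i 1) j i := by rw [← hCP.conjTranspose_map_single i j, conjTranspose_apply]
    _ = T (single i j 1) i j := by
      rw [← map_single_apply_perm hperm (Equiv.swap i j) j i j i]
      simp
  ext k l
  by_cases hkl : i = k ∧ j = l
  · obtain ⟨rfl, rfl⟩ := hkl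
    rw [← hα i j hij, Complex.conj_eq_iff_re.mp hreal]
    simp
  · rw [Matrix.smul_apply, single_apply_of_ne (h := hkl), smul_zero]
    by_contra hne
    exact (hsupp i j k l hne).elim hkl fun h => hij h.1

lemma exists_map_single_self_eq :
    ∃ β c : ℝ, ∀ i, T (single i i 1) = (c : ℂ) • 1 + (β : ℂ) • single i i 1 := by
  obtain ⟨a, ha⟩ := exists_forall_eq_of_perm_invariant
    (f := fun i => (T (single i i 1) i i).re) fun σ i => by
      simp only [map_single_apply_perm hperm]
  obtain ⟨c, hc⟩ := exists_forall_ne_eq_of_perm_invariant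
    (f := fun i k => (T (single i i 1) k k).re) fun σ i j => by
      simp only [map_single_apply_perm hperm]
  have hreal (i k : Fin d) : ((T (single i i 1) k k).re : ℂ) = T (single i i 1) k k :=
    Complex.conj_eq_iff_re.mp <| by
      simpa using congrFun₂ (hCP.conjTranspose_map_single i i) k k
  refine ⟨a - c, c, fun i => ?_⟩
  ext k l
  by_cases hkl : k = l
  · subst hkl
    by_cases hik : i = k
    · subst hik
      rw [← hreal, ha]
      simp
    · rw [← hreal, hc i k hik]
      simp [hik]
  · have hzero : T (single i i 1) k l = 0 := by
      by_contra hne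
      exact (hsupp i i k l hne).elim (fun h => hkl (h.1.symm.trans h.2)) fun h => hkl h.2
    simp [hzero, one_apply_ne hkl, single_apply_of_ne (h := fun h => hkl (h.1.symm.trans h.2))]

end Covariance

/-- Structure of channels covariant w.r.t. monomial unitaries: any quantum channel
covariant under `MU(d,n)` with `n ≥ 3` has the two-parameter form. -/
theorem covariant_eq_monomialMap {d n : ℕ} (hn : 3 ≤ n)
    (T : Md d →ₗ[ℂ] Md d) (hT : IsQuantumChannel T)
    (hcov : ∀ V : Md d, MemMU d n V → ∀ X : Md d, T (V * X * Vᴴ) = V * T X * Vᴴ) :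
    ∃ α β : ℝ, T = monomialMap d α β := by
  have hdiag (φ : Fin d → ℂ) (hφ : ∀ i, φ i ^ n = 1) := hcov _ (memMU_diagonal hφ)
  have hperm (σ : Equiv.Perm (Fin d)) (X : Md d) : T (X.submatrix σ σ) = (T X).submatrix σ σ := by
    simpa only [permMatrix_mul_mul_conjTranspose_permMatrix] using
      hcov _ (memMU_permMatrix n σ) X
  have hsupp (i j k l : Fin d) (hne : T (single i j 1) k l ≠ 0) :=
    eq_and_eq_or_eq_and_eq_of_map_single_apply_ne_zero hn hdiag hne
  obtain ⟨α, hα⟩ := exists_map_single_of_ne_eq_smul hsupp hT.1 hperm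
  obtain ⟨β, c, hβ⟩ := exists_map_single_self_eq hsupp hT.1 hperm
  refine ⟨α, β, ext_linearMap ℂ fun i j => LinearMap.ext_ring ?_⟩
  simp only [LinearMap.comp_apply, singleLinearMap_apply]
  rcases eq_or_ne i j with rfl | hij
  · have hd : (d : ℂ) ≠ 0 := Nat.cast_ne_zero.mpr (Fin.pos i).ne'
    have htrace := hT.2 (single i i 1)
    rw [hβ, trace_add, trace_smul, trace_smul, trace_one, trace_single_eq_same, Fintype.card_fin,
      smul_eq_mul, smul_eq_mul, mul_one] at htrace
    rw [hβ, monomialMap_single_self, show (c : ℂ) = (1 - β) / d by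
      field_simp; linear_combination htrace]
  · rw [hα i j hij, monomialMap_single_of_ne α β hij]
end
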